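/- arXiv:0911.4475 — 4 statements merged into one kernel-verified Lean document; each statement's English description precedes it below -/
import Mathlib

section
/- Let m_1, m_2, ..., m_n be integers with m_i ≥ 3 such that m_{i+1} ≡ 1 (mod m_i) for all i, and m_{i+j} ≡ -1 (mod m_i) for all i and all j ≥ 2. Then for every k ∈ {1,...,n-1}, m_k does not divide the sum m_{k+1}·m_{k+2}···m_n + m_{k+2}···m_n + ... + m_n + 1. -/
/-!
Modulo `m k`, the factor `m (k + 1)` is `1` and every later factor is `-1`, so each tail product
`∏ i ∈ Icc j n, m i` is a sign. Writing `n = k + 1 + d`, the sum becomes `(-1) ^ d` plus an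
alternating sum of `d + 1` signs, that is `2` when `d` is even and `-1` when `d` is odd; neither is
divisible by `m k ≥ 3`.
-/

open Finset

theorem sum_Icc_neg_one_pow_sub {R : Type*} [Ring R] (a b : ℕ) :
    ∑ j ∈ Icc a b, (-1 : R) ^ (b - j) = if Even (b + 1 - a) then 0 else 1 := by
  rw [← Ico_add_one_right_eq_Icc, sum_Ico_eq_sum_range, ← neg_one_geom_sum,
    ← sum_range_reflect]
  refine sum_congr rfl fun e he => ?_
  rw [mem_range] at he
  congr 1
  omega

section

variable {q : ℤ} {m : ℕ → ℤ} {a b : ℕ}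

theorem prod_Icc_modEq_neg_one_pow (h : ∀ i ∈ Icc a b, m i ≡ -1 [ZMOD q]) :
    ∏ i ∈ Icc a b, m i ≡ (-1) ^ (b + 1 - a) [ZMOD q] :=
  (Int.ModEq.prod h).trans <| by rw [prod_const, Nat.card_Icc]

theorem sum_Icc_prod_Icc_modEq (h : ∀ i ∈ Icc a b, m i ≡ -1 [ZMOD q]) :
    ∑ j ∈ Icc a (b + 1), ∏ i ∈ Icc j b, m i ≡ if Even (b + 2 - a) then 0 else 1 [ZMOD q] := by
  have hprod : ∀ j ∈ Icc a (b + 1), ∏ i ∈ Icc j b, m i ≡ (-1) ^ (b + 1 - j) [ZMOD q] :=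
    fun j hj => prod_Icc_modEq_neg_one_pow fun i hi =>
      h i (Icc_subset_Icc_left (mem_Icc.mp hj).1 hi)
  exact (Int.ModEq.sum hprod).trans <| by rw [sum_Icc_neg_one_pow_sub]

end

theorem not_dvd_neg_one_pow_add_ite {q : ℤ} (hq : 3 ≤ q) (d : ℕ) :
    ¬ q ∣ (-1) ^ d + if Even (d + 1) then 0 else 1 := by
  rcases Nat.even_or_odd d with hd | hd
  · rw [hd.neg_one_pow, if_neg (Nat.not_even_iff_odd.mpr hd.add_one)]
    exact fun h => by linarith [Int.le_of_dvd two_pos h]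
  · rw [hd.neg_one_pow, if_pos hd.add_one, add_zero, Int.dvd_neg]
    exact fun h => by linarith [Int.le_of_dvd one_pos h]

/-- If `m 1, …, m n` are integers with `m i ≥ 3`, `m (i+1) ≡ 1 (mod m i)` and
`m (i+j) ≡ -1 (mod m i)` for `j ≥ 2`, then for every `k ∈ {1,…,n-1}`, `m k` does not
divide `∑_{j=k+1}^{n+1} ∏_{i=j}^{n} m i` (empty product = 1). -/
theorem stmt0 (n : ℕ) (m : ℕ → ℤ)
    (hm : ∀ i ∈ Finset.Icc 1 n, 3 ≤ m i)
    (h1 : ∀ i, 1 ≤ i → i + 1 ≤ n → m (i + 1) ≡ 1 [ZMOD m i])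
    (h2 : ∀ i j, 1 ≤ i → 2 ≤ j → i + j ≤ n → m (i + j) ≡ -1 [ZMOD m i]) :
    ∀ k ∈ Finset.Icc 1 (n - 1),
      ¬ (m k ∣ ∑ j ∈ Finset.Icc (k + 1) (n + 1), ∏ i ∈ Finset.Icc j n, m i) := by
  intro k hk hdvd
  obtain ⟨hk1, hkn⟩ := mem_Icc.mp hk
  obtain ⟨d, rfl⟩ : ∃ d, n = k + 1 + d := ⟨n - (k + 1), by omega⟩
  have hneg : ∀ i ∈ Icc (k + 2) (k + 1 + d), m i ≡ -1 [ZMOD m k] := by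
    intro i hi
    obtain ⟨hi1, hi2⟩ := mem_Icc.mp hi
    simpa [Nat.add_sub_cancel' (by omega : k ≤ i)] using h2 k (i - k) hk1 (by omega) (by omega)
  have hhead : ∏ i ∈ Icc (k + 1) (k + 1 + d), m i ≡ (-1) ^ d [ZMOD m k] := by
    rw [← mul_prod_Ioc_eq_prod_Icc (by omega), ← Icc_add_one_left_eq_Ioc, ← one_mul ((-1) ^ d)]
    have hprod := prod_Icc_modEq_neg_one_pow hneg
    rw [show k + 1 + d + 1 - (k + 2) = d by omega] at hprod
    exact (h1 k hk1 (by omega)).mul hprod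
  have hsum := hhead.add (sum_Icc_prod_Icc_modEq hneg)
  rw [show k + 1 + d + 2 - (k + 2) = d + 1 by omega] at hsum
  rw [← add_sum_Ioc_eq_sum_Icc (by omega), ← Icc_add_one_left_eq_Ioc] at hdvd
  exact not_dvd_neg_one_pow_add_ite (hm k (mem_Icc.mpr ⟨hk1, by omega⟩)) d <|
    Int.modEq_zero_iff_dvd.mp (hsum.symm.trans (Int.modEq_zero_iff_dvd.mpr hdvd))
end

section
/- There exists a strictly increasing sequence of primes m_1 < m_2 < ... with m_1 ≥ 5 such that m_{i+1} ≡ 1 (mod m_i) and m_{i+j} ≡ -1 (mod m_i) for all i ≥ 1 and j ≥ 2. -/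
/-!
Each new prime is found by Dirichlet's theorem in the residue class modulo `P * L` that the
Chinese remainder theorem assigns to `-1 mod P` and `1 mod L`, where `L` is the last prime
chosen and `P` the product of all earlier ones. Since `p ≡ -1 mod P` makes `p` a unit modulo
`P`, the moduli stay coprime at every stage; and every earlier prime divides `P`, so `p` is
`-1` modulo each of them.
-/

theorem exists_prime_gt_natCast_eq_of_coprime {P L : ℕ} [NeZero P] [NeZero L]
    (hco : P.Coprime L) {a : ZMod P} {b : ZMod L} (ha : IsUnit a) (hb : IsUnit b) (n : ℕ) :
    ∃ p > n, p.Prime ∧ (p : ZMod P) = a ∧ (p : ZMod L) = b := by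
  let e := ZMod.chineseRemainder hco
  have hunit : IsUnit (e.symm (a, b)) := (Prod.isUnit_iff.2 ⟨ha, hb⟩).map e.symm
  obtain ⟨p, hpn, hp, hpe⟩ := Nat.forall_exists_prime_gt_and_eq_mod hunit n
  have hcomp : (p : ZMod P × ZMod L) = (a, b) := by
    simpa only [map_natCast, RingEquiv.apply_symm_apply] using congrArg e hpe
  exact ⟨p, hpn, hp, by simpa using congrArg Prod.fst hcomp,
    by simpa using congrArg Prod.snd hcomp⟩

def IsChainSucc (P L p : ℕ) : Prop :=
  p.Prime ∧ L < p ∧ (p : ZMod P) = -1 ∧ (p : ZMod L) = 1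

theorem exists_isChainSucc {P L : ℕ} (hP : P ≠ 0) (hL : L.Prime) (hco : P.Coprime L) :
    ∃ p, IsChainSucc P L p := by
  have : NeZero P := ⟨hP⟩
  have : NeZero L := ⟨hL.ne_zero⟩
  obtain ⟨p, hpL, hp, hpP, hpL'⟩ :=
    exists_prime_gt_natCast_eq_of_coprime hco isUnit_one.neg isUnit_one L
  exact ⟨p, hp, hpL, hpP, hpL'⟩

theorem IsChainSucc.coprime_mul {P L p : ℕ} (hL : L.Prime) (h : IsChainSucc P L p) :
    (P * L).Coprime p := by
  obtain ⟨hp, hLp, hpP, -⟩ := h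
  have hcoP : p.Coprime P := (ZMod.isUnit_iff_coprime p P).1 (hpP ▸ isUnit_one.neg)
  exact Nat.Coprime.mul_left hcoP.symm ((Nat.coprime_primes hL hp).2 hLp.ne)

open Classical in
noncomputable def chainSucc (P L : ℕ) : ℕ :=
  if h : ∃ p, IsChainSucc P L p then h.choose else 0

theorem isChainSucc_chainSucc {P L : ℕ} (hP : P ≠ 0) (hL : L.Prime) (hco : P.Coprime L) :
    IsChainSucc P L (chainSucc P L) := by
  have h := exists_isChainSucc hP hL hco
  rw [chainSucc, dif_pos h]
  exact h.choose_spec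

/-- `chain n = (m₁ ⋯ mₙ, mₙ₊₁)`. -/
noncomputable def chain : ℕ → ℕ × ℕ
  | 0 => (1, 5)
  | n + 1 => ((chain n).1 * (chain n).2, chainSucc (chain n).1 (chain n).2)

theorem chain_invariant (n : ℕ) :
    (chain n).1 ≠ 0 ∧ (chain n).2.Prime ∧ (chain n).1.Coprime (chain n).2 := by
  induction n with
  | zero => exact ⟨one_ne_zero, by norm_num [chain], Nat.coprime_one_left _⟩
  | succ n ih =>
    obtain ⟨hP, hL, hco⟩ := ih
    have hsucc := isChainSucc_chainSucc hP hL hco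
    exact ⟨mul_ne_zero hP hL.ne_zero, hsucc.1, hsucc.coprime_mul hL⟩

theorem isChainSucc_chain (n : ℕ) :
    IsChainSucc (chain n).1 (chain n).2 (chain (n + 1)).2 :=
  let ⟨hP, hL, hco⟩ := chain_invariant n
  isChainSucc_chainSucc hP hL hco

theorem chain_snd_dvd_fst {k n : ℕ} (hkn : k < n) : (chain k).2 ∣ (chain n).1 := by
  induction n with
  | zero => omega
  | succ n ih =>
    rcases Nat.lt_succ_iff_lt_or_eq.1 hkn with hlt | rfl
    · exact (ih hlt).mul_right _
    · exact dvd_mul_left _ _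

theorem natCast_chain_succ_eq_neg_one {k n : ℕ} (hkn : k < n) :
    ((chain (n + 1)).2 : ZMod (chain k).2) = -1 := by
  have h := congrArg (ZMod.castHom (chain_snd_dvd_fst hkn) (ZMod (chain k).2))
    (isChainSucc_chain n).2.2.1
  simpa only [map_natCast, map_neg, map_one] using h

theorem Int.natCast_modEq_of_natCast_eq {a n : ℕ} {b : ℤ} (h : (a : ZMod n) = b) :
    (a : ℤ) ≡ b [ZMOD n] :=
  (ZMod.intCast_eq_intCast_iff _ _ _).1 (by simpa only [Int.cast_natCast] using h)

/-- There is a strictly increasing sequence of primes `m 1 < m 2 < …` with `m 1 ≥ 5`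
such that `m (i+1) ≡ 1 (mod m i)` and `m (i+j) ≡ -1 (mod m i)` for all `i ≥ 1`, `j ≥ 2`. -/
theorem stmt2 : ∃ m : ℕ → ℕ,
    (∀ i, 1 ≤ i → (m i).Prime) ∧ 5 ≤ m 1 ∧
    (∀ i, 1 ≤ i → m i < m (i + 1)) ∧
    (∀ i, 1 ≤ i → (m (i + 1) : ℤ) ≡ 1 [ZMOD (m i : ℤ)]) ∧
    (∀ i j, 1 ≤ i → 2 ≤ j → (m (i + j) : ℤ) ≡ -1 [ZMOD (m i : ℤ)]) := by
  refine ⟨fun i => (chain (i - 1)).2, fun i _ => (chain_invariant (i - 1)).2.1, le_rfl,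
    ?_, ?_, ?_⟩
  · rintro (_ | k) hk
    · omega
    · exact (isChainSucc_chain k).2.1
  · rintro (_ | k) hk
    · omega
    · exact Int.natCast_modEq_of_natCast_eq (by exact_mod_cast (isChainSucc_chain k).2.2.2)
  · rintro (_ | k) j hk hj
    · omega
    · obtain ⟨n, hn, hkn⟩ : ∃ n, k + 1 + j - 1 = n + 1 ∧ k < n :=
        ⟨k + j - 1, by omega, by omega⟩
      simp only [hn, Nat.add_sub_cancel]
      exact Int.natCast_modEq_of_natCast_eq
        (by exact_mod_cast natCast_chain_succ_eq_neg_one hkn)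
end

section
/- In the finite setting X = Y = {1,...,N} with uniform marginals and cost c: X×Y → [0,∞), a set Γ ⊆ X×Y is cyclically c-monotone (for all (i_1,j_1),...,(i_n,j_n) ∈ Γ, Σ_k c(i_k,j_k) ≤ Σ_k c(i_k, j_{k+1}) with j_{n+1} = j_1) if and only if it is strongly cyclically c-monotone (there exist φ, ψ: {1,...,N} → ℝ with φ(i)+ψ(j) ≤ c(i,j) everywhere and equality on Γ). -/
/-!
Rockafellar's construction. Closing a chain `(x₀, y₀), …, (xₙ, yₙ)` of points of Γ into a cycle
shows, by cyclical monotonicity, that its cost `c x y₀ - c x₀ y₀ + c x₀ y₁ - ⋯ - c xₙ yₙ` from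
`x = xₙ` is nonnegative; for any other starting point `x` only the first term changes, so on a
finite space the chain costs from `x` are bounded below. Their infimum `φ x` satisfies
`φ x ≤ c x y' - c x' y' + φ x'` for `(x', y') ∈ Γ`, by prolonging chains by `(x', y')`, which makes
`φ` and its c-transform `ψ y = ⨅ x, c x y - φ x` tight on Γ. Conversely, potentials that are tight
on Γ telescope along every cycle.
-/

open Finset

variable {X Y : Type*} (c : X → Y → ℝ)

def CyclicallyMonotone (Γ : Set (X × Y)) : Prop :=
  ∀ (n : ℕ) (a : Fin (n + 1) → X) (b : Fin (n + 1) → Y), (∀ k, (a k, b k) ∈ Γ) →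
    ∑ k, c (a k) (b k) ≤ ∑ k, c (a k) (b (k + 1))

theorem cyclicallyMonotone_of_potentials {Γ : Set (X × Y)} (φ : X → ℝ) (ψ : Y → ℝ)
    (hle : ∀ x y, φ x + ψ y ≤ c x y) (heq : ∀ p ∈ Γ, φ p.1 + ψ p.2 = c p.1 p.2) :
    CyclicallyMonotone c Γ := by
  intro n a b hab
  have hshift : ∑ k, ψ (b (k + 1)) = ∑ k, ψ (b k) :=
    Equiv.sum_comp (Equiv.addRight (1 : Fin (n + 1))) (ψ ∘ b)
  calc ∑ k, c (a k) (b k) = ∑ k, (φ (a k) + ψ (b k)) :=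
        sum_congr rfl fun k _ => (heq _ (hab k)).symm
    _ = ∑ k, (φ (a k) + ψ (b (k + 1))) := by rw [sum_add_distrib, sum_add_distrib, hshift]
    _ ≤ ∑ k, c (a k) (b (k + 1)) := sum_le_sum fun k _ => hle _ _

section Chains

/-- The cost of the cycle through `(a 0, b 0), …, (a n, b n)`, except that its closing term
`c (a n) (b 0)` is replaced by `c x (b 0)`. -/
def chainCost (x : X) {n : ℕ} (a : Fin (n + 1) → X) (b : Fin (n + 1) → Y) : ℝ :=
  ∑ k : Fin n, c (a k.castSucc) (b k.succ) + c x (b 0) - ∑ k, c (a k) (b k)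

variable {c}

theorem chainCost_last_nonneg {Γ : Set (X × Y)} (h : CyclicallyMonotone c Γ) {n : ℕ}
    {a : Fin (n + 1) → X} {b : Fin (n + 1) → Y} (hab : ∀ k, (a k, b k) ∈ Γ) :
    0 ≤ chainCost c (a (Fin.last n)) a b := by
  have hcycle : ∑ k, c (a k) (b (k + 1)) =
      ∑ k : Fin n, c (a k.castSucc) (b k.succ) + c (a (Fin.last n)) (b 0) := by
    simp only [Fin.sum_univ_castSucc, Fin.coeSucc_eq_succ, Fin.last_add_one]
  have := h n a b hab
  rw [chainCost]
  linarith

theorem chainCost_cons (x x' : X) (y' : Y) {n : ℕ} (a : Fin (n + 1) → X)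
    (b : Fin (n + 1) → Y) :
    chainCost c x (Fin.cons x' a : Fin (n + 2) → X) (Fin.cons y' b) =
      c x y' - c x' y' + chainCost c x' a b := by
  simp only [chainCost, Fin.sum_univ_succ, Fin.castSucc_zero, Fin.cons_zero, Fin.castSucc_succ,
    Fin.cons_succ]
  ring

variable (c) in
def chainCosts (Γ : Set (X × Y)) (x : X) : Set ℝ :=
  {v | ∃ (n : ℕ) (a : Fin (n + 1) → X) (b : Fin (n + 1) → Y),
    (∀ k, (a k, b k) ∈ Γ) ∧ chainCost c x a b = v}

variable {Γ : Set (X × Y)}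

theorem chainCosts_nonempty {x' : X} {y' : Y} (hp : (x', y') ∈ Γ) (x : X) :
    (chainCosts c Γ x).Nonempty :=
  ⟨_, 0, fun _ => x', fun _ => y', fun _ => hp, rfl⟩

theorem add_mem_chainCosts {x' : X} {y' : Y} (hp : (x', y') ∈ Γ) (x : X) {v : ℝ}
    (hv : v ∈ chainCosts c Γ x') : c x y' - c x' y' + v ∈ chainCosts c Γ x := by
  obtain ⟨n, a, b, hab, rfl⟩ := hv
  refine ⟨n + 1, Fin.cons x' a, Fin.cons y' b, fun k => ?_, chainCost_cons x x' y' a b⟩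
  cases k using Fin.cases with
  | zero => exact hp
  | succ k => exact hab k

theorem bddBelow_chainCosts [Finite X] [Finite Y] (h : CyclicallyMonotone c Γ) (x : X) :
    BddBelow (chainCosts c Γ x) := by
  obtain ⟨m, hm⟩ := Finite.bddBelow_range fun p : X × X × Y => c p.1 p.2.2 - c p.2.1 p.2.2
  refine ⟨m, ?_⟩
  rintro _ ⟨n, a, b, hab, rfl⟩
  have hclose := chainCost_last_nonneg h hab
  have hm' := hm ⟨(x, a (Fin.last n), b 0), rfl⟩
  simp only [chainCost] at hclose ⊢
  linarith

variable (c) in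
noncomputable def rockafellarPotential (Γ : Set (X × Y)) (x : X) : ℝ :=
  sInf (chainCosts c Γ x)

theorem rockafellarPotential_le [Finite X] [Finite Y]
    (h : CyclicallyMonotone c Γ) {x' : X} {y' : Y} (hp : (x', y') ∈ Γ) (x : X) :
    rockafellarPotential c Γ x ≤ c x y' - c x' y' + rockafellarPotential c Γ x' := by
  rw [← sub_le_iff_le_add']
  refine le_csInf (chainCosts_nonempty hp x') fun v hv => ?_
  rw [sub_le_iff_le_add']
  exact csInf_le (bddBelow_chainCosts h x) (add_mem_chainCosts hp x hv)

end Chains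

noncomputable def cTransform (φ : X → ℝ) (y : Y) : ℝ :=
  ⨅ x, c x y - φ x

theorem add_cTransform_le [Finite X] (φ : X → ℝ) (x : X) (y : Y) :
    φ x + cTransform c φ y ≤ c x y := by
  have := ciInf_le (Finite.bddBelow_range fun x => c x y - φ x) x
  rw [cTransform]
  linarith

theorem add_cTransform_eq_of_forall_le [Finite X] {φ : X → ℝ} {x' : X} {y : Y}
    (h : ∀ x, c x' y - φ x' ≤ c x y - φ x) : φ x' + cTransform c φ y = c x' y := by
  have : Nonempty X := ⟨x'⟩
  have hinf := le_ciInf h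
  refine le_antisymm (add_cTransform_le c φ x' y) ?_
  rw [cTransform]
  linarith

theorem exists_potentials_of_cyclicallyMonotone [Finite X] [Finite Y] {Γ : Set (X × Y)}
    (h : CyclicallyMonotone c Γ) :
    ∃ (φ : X → ℝ) (ψ : Y → ℝ), (∀ x y, φ x + ψ y ≤ c x y) ∧
      ∀ p ∈ Γ, φ p.1 + ψ p.2 = c p.1 p.2 :=
  ⟨rockafellarPotential c Γ, cTransform c (rockafellarPotential c Γ), add_cTransform_le c _,
    fun _ hp => add_cTransform_eq_of_forall_le c fun x => by
      linarith [rockafellarPotential_le h hp x]⟩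

theorem stmt8_general (N : ℕ) (c : Fin N → Fin N → ℝ) (Γ : Set (Fin N × Fin N)) :
    (∀ (n : ℕ) (a b : Fin (n + 1) → Fin N), (∀ k, (a k, b k) ∈ Γ) →
        ∑ k, c (a k) (b k) ≤ ∑ k, c (a k) (b (k + 1))) ↔
      (∃ φ ψ : Fin N → ℝ, (∀ i j, φ i + ψ j ≤ c i j) ∧
        ∀ p ∈ Γ, φ p.1 + ψ p.2 = c p.1 p.2) :=
  ⟨exists_potentials_of_cyclicallyMonotone c,
    fun ⟨φ, ψ, hle, heq⟩ => cyclicallyMonotone_of_potentials c φ ψ hle heq⟩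

/-- In the finite setting, a set Γ is cyclically c-monotone if and only if it is strongly
cyclically c-monotone (there exist potentials φ, ψ with φ i + ψ j ≤ c i j everywhere and
equality on Γ). -/
theorem stmt8 (N : ℕ) (hN : 0 < N) (c : Fin N → Fin N → ℝ)
    (hc : ∀ i j, 0 ≤ c i j) (Γ : Set (Fin N × Fin N)) :
    (∀ (n : ℕ) (a b : Fin (n + 1) → Fin N), (∀ k, (a k, b k) ∈ Γ) →
        ∑ k, c (a k) (b k) ≤ ∑ k, c (a k) (b (k + 1))) ↔
      (∃ φ ψ : Fin N → ℝ, (∀ i j, φ i + ψ j ≤ c i j) ∧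
        ∀ p ∈ Γ, φ p.1 + ψ p.2 = c p.1 p.2) :=
  stmt8_general N c Γ
end

section
/- In the finite setting, the support of every optimal transport plan π̂ for the cost c is a cyclically c-monotone subset of {1,...,N}×{1,...,N}. -/
/-!
If the cycle `(a k, b k)` lies in the support of an optimal plan `π`, moving a small mass `ε`
from every edge `(a k, b k)` to the shifted edge `(a k, b (σ k))` keeps both marginals and,
for `ε` times the cycle length below the least mass on the cycle (pairs may repeat), keeps the
plan nonnegative. Optimality of `π` then says that this changes the cost by `ε (∑ c (a k) (b (σ k)) - ∑ c (a k) (b k)) ≥ 0`.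
-/

namespace OptimalTransport

variable {α β ι : Type*}

theorem exists_pos_mul_card_le [Fintype ι] {f : ι → ℝ} (hf : ∀ k, 0 < f k) :
    ∃ ε > 0, ∀ k, ε * Fintype.card ι ≤ f k := by
  cases isEmpty_or_nonempty ι
  · exact ⟨1, one_pos, fun k => isEmptyElim k⟩
  obtain ⟨k₀, hk₀⟩ := Finite.exists_min f
  have hcard : (0 : ℝ) < Fintype.card ι := Nat.cast_pos.2 Fintype.card_pos
  refine ⟨f k₀ / Fintype.card ι, div_pos (hf k₀) hcard, fun k => ?_⟩
  rw [div_mul_cancel₀ _ hcard.ne']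
  exact hk₀ k

section Plans

variable [Fintype α] [Fintype β]

def couplings (μ : α → ℝ) (ν : β → ℝ) : Set (α → β → ℝ) :=
  {π | (∀ i j, 0 ≤ π i j) ∧ (∀ i, ∑ j, π i j = μ i) ∧ (∀ j, ∑ i, π i j = ν j)}

def transportCost (c : α → β → ℝ) (π : α → β → ℝ) : ℝ :=
  ∑ i, ∑ j, c i j * π i j

end Plans

variable [Fintype ι] [DecidableEq α] [DecidableEq β]

def pairCount (a : ι → α) (b : ι → β) (i : α) (j : β) : ℝ :=
  ∑ k, if a k = i ∧ b k = j then 1 else 0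

section pairCount

variable (a : ι → α) (b : ι → β)

theorem sum_pairCount_right [Fintype β] (i : α) :
    ∑ j, pairCount a b i j = ∑ k, if a k = i then 1 else 0 := by
  unfold pairCount
  rw [Finset.sum_comm]
  simp [ite_and]

theorem sum_pairCount_left [Fintype α] (j : β) :
    ∑ i, pairCount a b i j = ∑ k, if b k = j then 1 else 0 := by
  unfold pairCount
  rw [Finset.sum_comm]
  simp [ite_and]

theorem sum_pairCount_comp_perm_left [Fintype α] (σ : Equiv.Perm ι) (j : β) :
    ∑ i, pairCount a (b ∘ σ) i j = ∑ i, pairCount a b i j := by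
  rw [sum_pairCount_left, sum_pairCount_left]
  exact Equiv.sum_comp σ fun k => if b k = j then 1 else 0

theorem pairCount_nonneg (i : α) (j : β) : 0 ≤ pairCount a b i j :=
  Finset.sum_nonneg fun _ _ => by positivity

theorem pairCount_le_card (i : α) (j : β) : pairCount a b i j ≤ Fintype.card ι := by
  calc pairCount a b i j ≤ ∑ _k : ι, (1 : ℝ) :=
        Finset.sum_le_sum fun _ _ => by split <;> norm_num
    _ = Fintype.card ι := by simp

theorem pairCount_eq_zero {i : α} {j : β} (h : ∀ k, ¬(a k = i ∧ b k = j)) :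
    pairCount a b i j = 0 :=
  Finset.sum_eq_zero fun k _ => if_neg (h k)

theorem transportCost_pairCount [Fintype α] [Fintype β] (c : α → β → ℝ) :
    transportCost c (pairCount a b) = ∑ k, c (a k) (b k) := by
  simp only [transportCost, pairCount, Finset.mul_sum]
  rw [Finset.sum_comm, Finset.sum_congr rfl fun _ _ => Finset.sum_comm]
  simp only [ite_and, mul_ite, mul_one, mul_zero, Finset.sum_ite_eq, Finset.mem_univ, if_true]
  rw [Finset.sum_comm]
  simp

end pairCount

def cycleShift (π : α → β → ℝ) (ε : ℝ) (a : ι → α) (b : ι → β) (σ : Equiv.Perm ι) :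
    α → β → ℝ :=
  fun i j => π i j + ε * (pairCount a (b ∘ σ) i j - pairCount a b i j)

section cycleShift

variable {π : α → β → ℝ} {ε : ℝ} {a : ι → α} {b : ι → β}

theorem cycleShift_nonneg (σ : Equiv.Perm ι) (hπ : ∀ i j, 0 ≤ π i j) (hε : 0 ≤ ε)
    (hsmall : ∀ k, ε * Fintype.card ι ≤ π (a k) (b k)) (i : α) (j : β) :
    0 ≤ cycleShift π ε a b σ i j := by
  have hshifted := mul_nonneg hε (pairCount_nonneg a (b ∘ σ) i j)
  unfold cycleShift
  by_cases hcycle : ∃ k, a k = i ∧ b k = j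
  · obtain ⟨k, rfl, rfl⟩ := hcycle
    have := mul_le_mul_of_nonneg_left (pairCount_le_card a b (a k) (b k)) hε
    linarith [hsmall k]
  · push Not at hcycle
    rw [pairCount_eq_zero a b fun k h => hcycle k h.1 h.2]
    linarith [hπ i j]

theorem cycleShift_mem_couplings [Fintype α] [Fintype β] {μ : α → ℝ} {ν : β → ℝ}
    (σ : Equiv.Perm ι) (hπ : π ∈ couplings μ ν) (hε : 0 ≤ ε)
    (hsmall : ∀ k, ε * Fintype.card ι ≤ π (a k) (b k)) :
    cycleShift π ε a b σ ∈ couplings μ ν := by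
  obtain ⟨hnonneg, hrow, hcol⟩ := hπ
  refine ⟨cycleShift_nonneg σ hnonneg hε hsmall, fun i => ?_, fun j => ?_⟩
  · simp only [cycleShift, Finset.sum_add_distrib, ← Finset.mul_sum, Finset.sum_sub_distrib,
      sum_pairCount_right, sub_self, mul_zero, add_zero, hrow]
  · simp only [cycleShift, Finset.sum_add_distrib, ← Finset.mul_sum, Finset.sum_sub_distrib,
      sum_pairCount_comp_perm_left, sub_self, mul_zero, add_zero, hcol]

theorem transportCost_cycleShift [Fintype α] [Fintype β] (c : α → β → ℝ) (σ : Equiv.Perm ι) :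
    transportCost c (cycleShift π ε a b σ) =
      transportCost c π + ε * (∑ k, c (a k) (b (σ k)) - ∑ k, c (a k) (b k)) := by
  change _ = _ + ε * (∑ k, c (a k) ((b ∘ σ) k) - _)
  rw [← transportCost_pairCount a b c, ← transportCost_pairCount a (b ∘ σ) c]
  have hpointwise : ∀ i j, c i j * cycleShift π ε a b σ i j = c i j * π i j +
      ε * (c i j * pairCount a (b ∘ σ) i j - c i j * pairCount a b i j) := fun i j => by
    unfold cycleShift; ring
  simp only [transportCost, hpointwise, Finset.sum_add_distrib, ← Finset.mul_sum,
    Finset.sum_sub_distrib]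

end cycleShift

theorem sum_cost_le_sum_cost_perm_of_optimal [Fintype α] [Fintype β] {c : α → β → ℝ}
    {μ : α → ℝ} {ν : β → ℝ} {π : α → β → ℝ} (hπ : π ∈ couplings μ ν)
    (hopt : ∀ π' ∈ couplings μ ν, transportCost c π ≤ transportCost c π')
    {a : ι → α} {b : ι → β} (hsupp : ∀ k, 0 < π (a k) (b k)) (σ : Equiv.Perm ι) :
    ∑ k, c (a k) (b k) ≤ ∑ k, c (a k) (b (σ k)) := by
  obtain ⟨ε, hε, hsmall⟩ := exists_pos_mul_card_le hsupp
  have hle := hopt _ (cycleShift_mem_couplings σ hπ hε.le hsmall)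
  rw [transportCost_cycleShift] at hle
  exact sub_nonneg.1 (nonneg_of_mul_nonneg_right (by linarith) hε)

end OptimalTransport

open OptimalTransport in
theorem stmt9_general (N : ℕ) (c : Fin N → Fin N → ℝ)
    (Pi : Set (Fin N → Fin N → ℝ))
    (hPi : Pi = {π | (∀ i j, 0 ≤ π i j) ∧ (∀ i, ∑ j, π i j = 1 / (N : ℝ)) ∧
      (∀ j, ∑ i, π i j = 1 / (N : ℝ))})
    (π₀ : Fin N → Fin N → ℝ) (hπ₀ : π₀ ∈ Pi)
    (hopt : ∀ π ∈ Pi, ∑ i, ∑ j, c i j * π₀ i j ≤ ∑ i, ∑ j, c i j * π i j) :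
    ∀ (n : ℕ) (a b : Fin (n + 1) → Fin N), (∀ k, 0 < π₀ (a k) (b k)) →
      ∑ k, c (a k) (b k) ≤ ∑ k, c (a k) (b (k + 1)) := by
  intro n a b hsupp
  subst hPi
  exact sum_cost_le_sum_cost_perm_of_optimal (μ := fun _ => 1 / (N : ℝ))
    (ν := fun _ => 1 / (N : ℝ)) hπ₀ hopt hsupp (Equiv.addRight 1)

/-- In the finite setting, the support of every optimal transport plan is cyclically
c-monotone. -/
theorem stmt9 (N : ℕ) (hN : 0 < N) (c : Fin N → Fin N → ℝ)
    (hc : ∀ i j, 0 ≤ c i j)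
    (Pi : Set (Fin N → Fin N → ℝ))
    (hPi : Pi = {π | (∀ i j, 0 ≤ π i j) ∧ (∀ i, ∑ j, π i j = 1 / (N : ℝ)) ∧
      (∀ j, ∑ i, π i j = 1 / (N : ℝ))})
    (π₀ : Fin N → Fin N → ℝ) (hπ₀ : π₀ ∈ Pi)
    (hopt : ∀ π ∈ Pi, ∑ i, ∑ j, c i j * π₀ i j ≤ ∑ i, ∑ j, c i j * π i j) :
    ∀ (n : ℕ) (a b : Fin (n + 1) → Fin N), (∀ k, 0 < π₀ (a k) (b k)) →
      ∑ k, c (a k) (b k) ≤ ∑ k, c (a k) (b (k + 1)) :=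
  stmt9_general N c Pi hPi π₀ hπ₀ hopt
end
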